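/- arXiv:2411.08426 — 4 statements merged into one kernel-verified Lean document; each statement's English description precedes it below -/
import Mathlib

section
/- For all n ≥ 0: n! · |BMat[n]| = Σ_{k=0}^{n} (-1)^{n-k} c(n,k) · fub(k)^2, where BMat[n] is the set of binary Burge matrices of size n. -/
open Finset

noncomputable def fubini (n : ℕ) : ℕ :=
  Set.ncard {L : List (Finset (Fin n)) |
    (∀ B ∈ L, B.Nonempty) ∧ L.Pairwise Disjoint ∧ ∀ x, ∃ B ∈ L, x ∈ B}

noncomputable def stirling1 (n k : ℕ) : ℕ :=
  Set.ncard {σ : Equiv.Perm (Fin n) |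
    (n - σ.support.card) + Multiset.card σ.cycleType = k}

noncomputable def BMatCard (n : ℕ) : ℕ :=
  Set.ncard {p : Σ r : ℕ, Σ k : ℕ, Matrix (Fin r) (Fin k) ℕ |
    (∑ i, ∑ j, p.2.2 i j) = n ∧ (∀ i j, p.2.2 i j ≤ 1) ∧
      (∀ i, ∃ j, 0 < p.2.2 i j) ∧ ∀ j, ∃ i, 0 < p.2.2 i j}


/-!
An ordered set partition of `Fin k` into `r` blocks is the list of fibres of a surjection
`Fin k → Fin r`, so a pair of ordered set partitions is a map `h : Fin k → Fin r × Fin c` with both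
coordinates onto. Grouping these maps by their image `S`, a bitotal relation, i.e. the support of a
binary Burge matrix, gives `fub(k)² = ∑_S |S|! · S(k, |S|)`. Summing against `(-1)^(n-k) c(n,k)`,
the orthogonality of the Stirling numbers of the two kinds leaves only the patterns of size `n`,
each with weight `n!`.
-/

open Function
open scoped Nat

namespace Nat

theorem sum_stirlingFirst_mul_stirlingSecond (n m : ℕ) :
    ∑ k ∈ range (n + 1), (-1 : ℤ) ^ (n - k) * stirlingFirst n k * stirlingSecond k m =
      if n = m then 1 else 0 := by
  induction n generalizing m with
  | zero => cases m <;> simp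
  | succ n ih =>
    have hshift : ∑ k ∈ range (n + 1),
        (-1 : ℤ) ^ (n - k) * (n * stirlingFirst n (k + 1)) * stirlingSecond (k + 1) m =
          -(n * if n = m then 1 else 0) := by
      -- the boundary term `k = 0` of the shifted sum carries the factor `n * stirlingFirst n 0 = 0`
      rcases n with _ | n
      · simp
      rw [← ih, sum_range_succ, stirlingFirst_eq_zero_of_lt (lt_add_one _),
        sum_range_succ' _ (n + 1), stirlingFirst_succ_zero]
      simp only [Nat.cast_zero, mul_zero, zero_mul, add_zero, mul_sum, ← sum_neg_distrib]
      refine sum_congr rfl fun k hk => ?_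
      rw [show n + 1 - k = n + 1 - (k + 1) + 1 by grind, pow_succ]
      ring
    have hnext (m : ℕ) : ∑ k ∈ range (n + 1),
        (-1 : ℤ) ^ (n - k) * stirlingFirst n k * stirlingSecond (k + 1) (m + 1) =
          (m + 1) * (if n = m + 1 then 1 else 0) + if n = m then 1 else 0 := by
      simp only [stirlingSecond_succ_succ, ← ih]
      push_cast
      simp only [mul_sum, ← sum_add_distrib]
      exact sum_congr rfl fun k _ => by ring
    rw [sum_range_succ']
    simp only [stirlingFirst_succ_succ, Nat.add_sub_add_right, stirlingFirst_succ_zero]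
    push_cast
    simp only [add_mul, mul_add, sum_add_distrib, hshift]
    rcases m with _ | m
    · simp
    · rw [hnext]
      split_ifs <;> grind

end Nat

theorem Option.surjective_iff {α β : Type*} (f : Option α → β) :
    Surjective f ↔ Surjective (f ∘ some) ∨ Set.range (f ∘ some) = {f none}ᶜ := by
  rw [← Set.range_eq_univ, ← Set.range_eq_univ, Option.range_eq]
  constructor
  · intro h
    by_cases hb : f none ∈ Set.range (f ∘ some)
    · exact .inl (by rwa [Set.insert_eq_of_mem hb] at h)
    · refine .inr (Set.ext fun y => ?_)
      have := h.symm.subset (Set.mem_univ y)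
      grind
  · rintro (h | h) <;> simp [h, Set.insert_eq, Set.union_compl_self]

namespace Nat

theorem card_range_eq_card_surjective {α β : Type*} (s : Set β) :
    Nat.card {g : α → β // Set.range g = s} = Nat.card {g : α → s // Surjective g} :=
  Nat.card_congr
    { toFun g := ⟨fun x => ⟨g.1 x, g.2.subset (Set.mem_range_self x)⟩, fun y => by
        obtain ⟨x, hx⟩ := g.2.symm.subset y.2
        exact ⟨x, Subtype.ext hx⟩⟩
      invFun g := ⟨Subtype.val ∘ g.1, by rw [Set.range_comp, g.2.range_eq, Set.image_univ,
        Subtype.range_coe]⟩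
      left_inv _ := rfl
      right_inv _ := rfl }

theorem card_surjective_option {α β : Type*} [Finite α] [Fintype β] :
    Nat.card {f : Option α → β // Surjective f} =
      Fintype.card β * Nat.card {g : α → β // Surjective g} +
        ∑ b : β, Nat.card {g : α → ({b}ᶜ : Set β) // Surjective g} := by
  classical
  let p (b : β) (g : α → β) : Prop := Surjective g ∨ Set.range g = {b}ᶜ
  have hdisj (b : β) : Disjoint (Surjective : (α → β) → Prop) (Set.range · = {b}ᶜ) :=
    le_compl_iff_disjoint_right.mp fun g hg hg' => by
      obtain ⟨x, hx⟩ := hg b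
      simpa [hx] using hg'.subset (Set.mem_range_self x)
  rw [Nat.card_congr ((Equiv.subtypeEquiv Equiv.piOptionEquivProd Option.surjective_iff).trans
    (Equiv.subtypeProdEquivSigmaSubtype p)), Nat.card_sigma]
  simp only [p, Nat.card_congr (subtypeOrEquiv _ _ (hdisj _)), Nat.card_sum, sum_add_distrib,
    card_range_eq_card_surjective, sum_const, smul_eq_mul]
  rfl

theorem card_surjective (α β : Type*) [Finite α] [Finite β] :
    Nat.card {f : α → β // Surjective f} =
      (Nat.card β)! * stirlingSecond (Nat.card α) (Nat.card β) := by
  induction α using Finite.induction_empty_option generalizing β with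
  | of_equiv e ih =>
    rw [← Nat.card_congr e, ← ih, Nat.card_congr (Equiv.subtypeEquiv (e.arrowCongr (.refl β))
      fun f => e.symm.surjective.of_comp_iff f |>.symm)]
  | h_empty =>
    rcases isEmpty_or_nonempty β with hβ | hβ
    · rw [Nat.card_eq_one_iff_unique.mpr ⟨inferInstance, ⟨⟨isEmptyElim, isEmptyElim⟩⟩⟩]
      simp
    · obtain ⟨m, hm⟩ := Nat.exists_eq_succ_of_ne_zero (Nat.card_pos (α := β)).ne'
      rw [Nat.card_eq_zero.mpr (.inl ⟨fun f => isEmptyElim (f.2 hβ.some).choose⟩), hm]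
      simp
  | @h_option α _ ih =>
    cases nonempty_fintype β
    classical
    have hcompl (b : β) : Nat.card ({b}ᶜ : Set β) = Fintype.card β - 1 := by
      rw [Nat.card_eq_fintype_card, Fintype.card_compl_set]; simp
    rw [card_surjective_option]
    simp only [ih, hcompl, Nat.card_eq_fintype_card, Fintype.card_option, sum_const, smul_eq_mul,
      Finset.card_univ]
    cases h : Fintype.card β with
    | zero => simp
    | succ m =>
      simp only [stirlingSecond_succ_succ, factorial_succ, add_tsub_cancel_right]
      ring

end Nat

namespace Equiv.Perm

theorem disjoint_swap_of_apply_eq_self {α : Type*} [DecidableEq α] {f : Perm α} {a b : α}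
    (ha : f a = a) (hb : f b = b) : (swap a b).Disjoint f := fun x => by
  by_cases hx : x = a ∨ x = b
  · rcases hx with rfl | rfl <;> simp [*]
  · push Not at hx
    exact .inl (swap_apply_of_ne_of_ne hx.1 hx.2)

variable {α : Type*} [Fintype α] [DecidableEq α]

theorem IsCycle.swap_mul_of_apply_eq_self {c : Perm α} (hc : c.IsCycle) {a b : α}
    (ha : c a = a) (hb : c b ≠ b) :
    (swap a b * c).IsCycle ∧ (swap a b * c).support = insert a c.support := by
  have hbs : b ∈ c.support := mem_support.mpr hb
  obtain ⟨l, hl⟩ : ∃ l, c.toList b = b :: l := by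
    obtain ⟨k, hk⟩ := Nat.exists_eq_add_of_lt (length_toList_pos_of_mem_support c b hbs)
    rw [length_toList] at hk
    exact ⟨_, by rw [toList, hk]; rfl⟩
  have hnodup : (a :: c.toList b).Nodup :=
    List.nodup_cons.mpr ⟨fun h => hb ((mem_toList_iff.mp h).1.apply_eq_self_iff.mpr ha),
      nodup_toList c b⟩
  have hform : (a :: c.toList b).formPerm = swap a b * c := by
    rw [hl, List.formPerm_cons_cons, ← hl, formPerm_toList, hc.cycleOf_eq hb]
  have hlen : 2 ≤ (a :: c.toList b).length := by simp [hl]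
  rw [← hform]
  refine ⟨List.isCycle_formPerm hnodup hlen, ?_⟩
  rw [List.support_formPerm_of_nodup _ hnodup fun x h => by simp [h] at hlen, List.toFinset_cons,
    ← List.support_formPerm_of_nodup _ (nodup_toList c b) (toList_ne_singleton c b),
    formPerm_toList, hc.cycleOf_eq hb]

/-- The number of cycles of `σ`, fixed points counted as cycles of length one. -/
def numCycles (σ : Perm α) : ℕ := (Fintype.card α - #σ.support) + σ.cycleType.card

theorem IsCycle.numCycles {c : Perm α} (hc : c.IsCycle) :
    c.numCycles = Fintype.card α - #c.support + 1 := by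
  simp [Perm.numCycles, hc.cycleType]

theorem Disjoint.numCycles_mul {f g : Perm α} (h : f.Disjoint g) :
    (f * g).numCycles + Fintype.card α = f.numCycles + g.numCycles := by
  have hle : #f.support + #g.support ≤ Fintype.card α := by
    rw [← h.card_support_mul]; exact card_le_univ _
  simp only [Perm.numCycles, h.cycleType_mul, h.card_support_mul, Multiset.card_add]
  omega

theorem numCycles_swap_mul_of_apply_eq_self {σ : Perm α} {a b : α} (ha : σ a = a) (hb : σ b = b)
    (hab : a ≠ b) : (swap a b * σ).numCycles + 1 = σ.numCycles := by
  have := (disjoint_swap_of_apply_eq_self ha hb).numCycles_mul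
  have hcard := card_le_univ (swap a b).support
  rw [(isCycle_swap hab).numCycles, card_support_swap hab] at *
  omega

/-- With `c` the cycle of `b` and `σ = ρ * c`, we have `swap a b * σ = ρ * (swap a b * c)`, and
`swap a b * c` is the cycle `c` with `a` inserted. -/
theorem numCycles_swap_mul_of_apply_ne {σ : Perm α} {a b : α} (ha : σ a = a) (hb : σ b ≠ b) :
    (swap a b * σ).numCycles + 1 = σ.numCycles := by
  set c := σ.cycleOf b
  set ρ := σ * c⁻¹
  have hcmem : c ∈ σ.cycleFactorsFinset :=
    cycleOf_mem_cycleFactorsFinset_iff.mpr (mem_support.mpr hb)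
  have hc : c.IsCycle := (mem_cycleFactorsFinset_iff.mp hcmem).1
  have hd : ρ.Disjoint c := disjoint_mul_inv_of_mem_cycleFactorsFinset hcmem
  have hca : c a = a := by rw [cycleOf_apply]; split_ifs <;> simp [ha]
  have hcb : c b ≠ b := by rwa [cycleOf_apply_self]
  have hρa : ρ a = a := by simp [ρ, c.symm_apply_eq.mpr hca.symm, ha]
  obtain ⟨hc', hsupp'⟩ := hc.swap_mul_of_apply_eq_self hca hcb
  have hcomm : swap a b * σ = ρ * (swap a b * c) := by
    rw [← mul_assoc, ← (disjoint_swap_of_apply_eq_self hρa ((hd b).resolve_right hcb)).commute.eq,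
      mul_assoc, inv_mul_cancel_right]
  have hd' : ρ.Disjoint (swap a b * c) := by
    rw [disjoint_iff_disjoint_support, hsupp', Finset.disjoint_insert_right]
    exact ⟨notMem_support.mpr hρa, disjoint_iff_disjoint_support.mp hd⟩
  have h1 := hd.numCycles_mul
  have h2 := hd'.numCycles_mul
  have hcard := card_le_univ (swap a b * c).support
  rw [inv_mul_cancel_right, hc.numCycles] at h1
  rw [← hcomm, hc'.numCycles] at h2
  rw [hsupp', card_insert_of_notMem (notMem_support.mpr hca)] at h2 hcard
  omega

theorem numCycles_swap_mul {σ : Perm α} {a b : α} (ha : σ a = a) (hab : a ≠ b) :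
    (swap a b * σ).numCycles + 1 = σ.numCycles := by
  by_cases hb : σ b = b
  · exact numCycles_swap_mul_of_apply_eq_self ha hb hab
  · exact numCycles_swap_mul_of_apply_ne ha hb

theorem decomposeFin_symm_zero {n : ℕ} (e : Perm (Fin n)) :
    decomposeFin.symm (0, e) = e.extendDomain (finSuccAboveEquiv 0) := by
  ext x
  refine Fin.cases ?_ (fun i => ?_) x
  · simp [extendDomain_apply_not_subtype]
  · have : (finSuccAboveEquiv 0).symm ⟨i.succ, i.succ_ne_zero⟩ = i := by
      rw [Equiv.symm_apply_eq]; ext; simp [finSuccAboveEquiv_apply]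
    simp [extendDomain_apply_subtype, finSuccAboveEquiv_apply, this]

theorem numCycles_decomposeFin_symm {n : ℕ} (p : Fin (n + 1)) (e : Perm (Fin n)) :
    (decomposeFin.symm (p, e)).numCycles = e.numCycles + if p = 0 then 1 else 0 := by
  have h0 : (decomposeFin.symm (0, e)).numCycles = e.numCycles + 1 := by
    have := card_le_univ e.support
    simp only [numCycles, decomposeFin_symm_zero, card_support_extend_domain,
      cycleType_extendDomain, Fintype.card_fin] at *
    omega
  split_ifs with hp
  · rw [hp, h0]
  · rw [add_zero, ← Nat.add_right_cancel_iff (n := 1), ← h0,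
      show decomposeFin.symm (p, e) = swap 0 p * decomposeFin.symm (0, e) by
        ext x; refine Fin.cases ?_ (fun i => ?_) x <;> simp]
    exact numCycles_swap_mul (by simp) (Ne.symm hp)

theorem card_filter_numCycles_eq (n k : ℕ) :
    #{σ : Perm (Fin n) | σ.numCycles = k} = Nat.stirlingFirst n k := by
  induction n generalizing k with
  | zero => cases k <;> simp [Subsingleton.elim _ (1 : Perm (Fin 0)), numCycles]
  | succ n ih =>
    rw [card_filter, ← decomposeFin.symm.sum_comp, Fintype.sum_prod_type, Fin.sum_univ_succ]
    simp only [numCycles_decomposeFin_symm, if_pos, Fin.succ_ne_zero, if_false, add_zero,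
      ← card_filter, ih, sum_const, card_univ, Fintype.card_fin, smul_eq_mul]
    cases k with
    | zero => cases n <;> simp
    | succ k =>
      simp only [add_left_inj, ih, Nat.stirlingFirst_succ_succ]
      ring

end Equiv.Perm

theorem stirling1_eq_stirlingFirst (n k : ℕ) : stirling1 n k = Nat.stirlingFirst n k := by
  rw [← Equiv.Perm.card_filter_numCycles_eq, stirling1, Set.ncard_eq_toFinset_card',
    Set.toFinset_ofPred]
  simp [Equiv.Perm.numCycles]

def Function.fiberList {k r : ℕ} (f : Fin k → Fin r) : List (Finset (Fin k)) :=
  List.ofFn fun i => univ.filter (f · = i)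

theorem Function.fiberList_injective {k : ℕ} :
    Injective fun p : Σ r, Fin k → Fin r => fiberList p.2 := by
  rintro ⟨r, f⟩ ⟨r', f'⟩ h
  obtain ⟨rfl, h⟩ := Sigma.mk.inj_iff.mp (List.ofFn_inj'.mp h)
  congr 1
  funext x
  have := (Finset.ext_iff.mp (congrFun (eq_of_heq h) (f x)) x).mp (by simp)
  simpa [eq_comm] using this

theorem exists_fiberList_eq_iff {k : ℕ} (L : List (Finset (Fin k))) :
    (∃ p : Σ r, Fin k → Fin r, Surjective p.2 ∧ fiberList p.2 = L) ↔
      (∀ B ∈ L, B.Nonempty) ∧ L.Pairwise Disjoint ∧ ∀ x, ∃ B ∈ L, x ∈ B := by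
  constructor
  · rintro ⟨⟨r, f⟩, hf, rfl⟩
    dsimp only at hf
    refine ⟨?_, ?_, fun x => ⟨_, List.mem_ofFn.mpr ⟨f x, rfl⟩, by simp⟩⟩
    · simp only [fiberList, List.mem_ofFn, forall_exists_index]
      rintro _ i rfl
      obtain ⟨x, hx⟩ := hf i
      exact ⟨x, by simp [hx]⟩
    · rw [fiberList, List.pairwise_ofFn]
      intro i j hij
      simpa [Finset.disjoint_left] using fun a ha hb => hij.ne (ha.symm.trans hb)
  · rintro ⟨hne, hdisj, hcov⟩
    have hcov' (x : Fin k) : ∃ i, x ∈ L.get i := by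
      obtain ⟨B, hB, hx⟩ := hcov x
      obtain ⟨i, rfl⟩ := List.get_of_mem hB
      exact ⟨i, hx⟩
    choose f hf using hcov'
    have huniq {x : Fin k} {i : Fin L.length} (hx : x ∈ L.get i) : f x = i := by
      by_contra hne
      rcases lt_or_gt_of_ne hne with hlt | hlt
      · exact Finset.disjoint_left.mp (List.pairwise_iff_get.mp hdisj _ _ hlt) (hf x) hx
      · exact Finset.disjoint_left.mp (List.pairwise_iff_get.mp hdisj _ _ hlt) hx (hf x)
    refine ⟨⟨_, f⟩, fun i => ?_, ?_⟩
    · obtain ⟨x, hx⟩ := hne _ (L.get_mem i)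
      exact ⟨x, huniq hx⟩
    · refine (congrArg List.ofFn (funext fun i => ?_)).trans (List.ofFn_get L)
      ext x
      simpa using ⟨fun h => h ▸ hf x, huniq⟩

theorem fubini_eq_sum {k N : ℕ} (hk : k ≤ N) :
    fubini k = ∑ r ∈ range (N + 1), Nat.card {f : Fin k → Fin r // Surjective f} := by
  have hset : {L : List (Finset (Fin k)) |
      (∀ B ∈ L, B.Nonempty) ∧ L.Pairwise Disjoint ∧ ∀ x, ∃ B ∈ L, x ∈ B} =
      (fun p : Σ r, Fin k → Fin r => fiberList p.2) ''
        ↑((range (N + 1)).sigma fun r => univ.filter (Surjective : (Fin k → Fin r) → Prop)) := by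
    ext L
    simp only [Set.mem_ofPred_eq, ← exists_fiberList_eq_iff, Set.mem_image, coe_sigma,
      Set.mem_sigma_iff, mem_coe, mem_range, mem_filter, mem_univ, true_and, and_assoc]
    refine exists_congr fun p => ⟨fun h => ⟨?_, h⟩, fun h => h.2⟩
    have := Fintype.card_le_of_surjective _ h.1
    simp only [Fintype.card_fin] at this
    omega
  rw [fubini, hset, Set.ncard_image_of_injective _ fiberList_injective, Set.ncard_coe_finset,
    card_sigma]
  simp [Nat.card_eq_fintype_card, Fintype.card_subtype]

/-- The support of a binary Burge matrix. -/
def Finset.IsBitotal {β γ : Type*} (S : Finset (β × γ)) : Prop :=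
  (∀ b, ∃ c, (b, c) ∈ S) ∧ ∀ c, ∃ b, (b, c) ∈ S

instance {β γ : Type*} [Fintype β] [Fintype γ] [DecidableEq β] [DecidableEq γ] :
    DecidablePred (Finset.IsBitotal (β := β) (γ := γ)) :=
  fun S => by unfold Finset.IsBitotal; infer_instance

namespace Finset

variable {β γ : Type*}

theorem IsBitotal.card_left_le [Fintype β] {S : Finset (β × γ)} (hS : S.IsBitotal) :
    Fintype.card β ≤ #S :=
  card_le_card_of_surjOn Prod.fst fun b _ => by
    obtain ⟨c, hc⟩ := hS.1 b
    exact ⟨(b, c), hc, rfl⟩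

theorem IsBitotal.card_right_le [Fintype γ] {S : Finset (β × γ)} (hS : S.IsBitotal) :
    Fintype.card γ ≤ #S :=
  card_le_card_of_surjOn Prod.snd fun c _ => by
    obtain ⟨b, hb⟩ := hS.2 c
    exact ⟨(b, c), hb, rfl⟩

theorem isBitotal_image_univ_iff {α : Type*} [Fintype α] [DecidableEq β] [DecidableEq γ]
    (h : α → β × γ) :
    (univ.image h).IsBitotal ↔ Surjective (Prod.fst ∘ h) ∧ Surjective (Prod.snd ∘ h) := by
  simp only [IsBitotal, Surjective, mem_image, mem_univ, true_and, comp_apply]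
  constructor
  · rintro ⟨h1, h2⟩
    exact ⟨fun b => by obtain ⟨c, x, hx⟩ := h1 b; exact ⟨x, by simp [hx]⟩,
      fun c => by obtain ⟨b, x, hx⟩ := h2 c; exact ⟨x, by simp [hx]⟩⟩
  · rintro ⟨h1, h2⟩
    exact ⟨fun b => by obtain ⟨x, hx⟩ := h1 b; exact ⟨(h x).2, x, by simp [← hx]⟩,
      fun c => by obtain ⟨x, hx⟩ := h2 c; exact ⟨(h x).1, x, by simp [← hx]⟩⟩

variable [DecidableEq β] [DecidableEq γ]

def toMatrix (S : Finset (β × γ)) : Matrix β γ ℕ :=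
  Matrix.of fun b c => if (b, c) ∈ S then 1 else 0

theorem sum_toMatrix [Fintype β] [Fintype γ] (S : Finset (β × γ)) :
    ∑ b, ∑ c, S.toMatrix b c = #S := by
  rw [← Fintype.sum_prod_type' (f := fun b c => S.toMatrix b c)]
  simp [toMatrix]

theorem toMatrix_injective : Injective (toMatrix : Finset (β × γ) → Matrix β γ ℕ) :=
  fun S S' h => by
    ext ⟨b, c⟩
    have := congrFun₂ h b c
    simp only [toMatrix, Matrix.of_apply] at this
    split_ifs at this <;> simp_all

theorem exists_toMatrix_eq_iff [Fintype β] [Fintype γ] (M : Matrix β γ ℕ) (s : ℕ) :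
    (∃ S : Finset (β × γ), S.IsBitotal ∧ #S = s ∧ S.toMatrix = M) ↔
      (∑ b, ∑ c, M b c) = s ∧ (∀ b c, M b c ≤ 1) ∧ (∀ b, ∃ c, 0 < M b c) ∧
        ∀ c, ∃ b, 0 < M b c := by
  constructor
  · rintro ⟨S, ⟨hrow, hcol⟩, rfl, rfl⟩
    refine ⟨sum_toMatrix S, fun b c => ?_, fun b => ?_, fun c => ?_⟩
    · simp only [toMatrix, Matrix.of_apply]; split_ifs <;> simp
    · obtain ⟨c, hc⟩ := hrow b; exact ⟨c, by simp [toMatrix, hc]⟩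
    · obtain ⟨b, hb⟩ := hcol c; exact ⟨b, by simp [toMatrix, hb]⟩
  · rintro ⟨hsum, hle, hrow, hcol⟩
    have hM : (univ.filter fun x : β × γ => 0 < M x.1 x.2).toMatrix = M := by
      ext b c
      have := hle b c
      simp only [toMatrix, Matrix.of_apply, mem_filter, mem_univ, true_and]
      split_ifs <;> omega
    refine ⟨_, ⟨fun b => ?_, fun c => ?_⟩, ?_, hM⟩
    · simpa using hrow b
    · simpa using hcol c
    · rw [← sum_toMatrix, hM, hsum]

end Finset

/-- A pair of surjections is a map into the product whose image is bitotal; group by image. -/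
theorem card_surjective_mul_card_surjective (α β γ : Type*) [Fintype α] [Fintype β] [Fintype γ]
    [DecidableEq β] [DecidableEq γ] :
    Nat.card {f : α → β // Surjective f} * Nat.card {g : α → γ // Surjective g} =
      ∑ S : Finset (β × γ) with S.IsBitotal, Nat.card {h : α → S // Surjective h} := by
  have hfiber (S : Finset (β × γ)) :
      Nat.card {h : α → β × γ // univ.image h = S} = Nat.card {h : α → S // Surjective h} :=
    (Nat.card_congr (Equiv.subtypeEquivRight fun h => by
      rw [← Finset.coe_inj, coe_image, coe_univ, Set.image_univ])).trans
      (Nat.card_range_eq_card_surjective (S : Set (β × γ)))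
  have e : {h : α → β × γ // (univ.image h).IsBitotal} ≃
      {f : α → β // Surjective f} × {g : α → γ // Surjective g} :=
    ((Equiv.arrowProdEquivProdArrow α _ _).subtypeEquiv
      Finset.isBitotal_image_univ_iff).trans Equiv.subtypeProdEquivProd
  rw [← Nat.card_prod, ← Nat.card_congr e,
    ← Nat.card_congr (Equiv.sigmaSubtypeFiberEquivSubtype (fun h => univ.image h) fun _ => Iff.rfl),
    Nat.card_sigma]
  simp only [hfiber]
  symm
  exact sum_subtype _ (fun S => mem_filter_univ S) _

def burgePatterns (N : ℕ) : Finset (Σ r : ℕ, Σ c : ℕ, Finset (Fin r × Fin c)) :=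
  (range (N + 1)).sigma fun _ => (range (N + 1)).sigma fun _ => univ.filter Finset.IsBitotal

def patternMatrix (t : Σ r : ℕ, Σ c : ℕ, Finset (Fin r × Fin c)) :
    Σ r : ℕ, Σ c : ℕ, Matrix (Fin r) (Fin c) ℕ :=
  ⟨t.1, t.2.1, t.2.2.toMatrix⟩

theorem patternMatrix_injective : Injective patternMatrix := by
  rintro ⟨r, c, S⟩ ⟨r', c', S'⟩ h
  simp only [patternMatrix, Sigma.mk.inj_iff] at h
  obtain ⟨rfl, h⟩ := h
  simp only [heq_eq_eq, Sigma.mk.inj_iff] at h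
  obtain ⟨rfl, h⟩ := h
  rw [Finset.toMatrix_injective (eq_of_heq h)]

theorem BMatCard_eq_card (s : ℕ) : BMatCard s = #{t ∈ burgePatterns s | #t.2.2 = s} := by
  have hset : {p : Σ r : ℕ, Σ c : ℕ, Matrix (Fin r) (Fin c) ℕ |
      (∑ i, ∑ j, p.2.2 i j) = s ∧ (∀ i j, p.2.2 i j ≤ 1) ∧
        (∀ i, ∃ j, 0 < p.2.2 i j) ∧ ∀ j, ∃ i, 0 < p.2.2 i j} =
      patternMatrix '' ↑{t ∈ burgePatterns s | #t.2.2 = s} := by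
    ext p
    simp only [Set.mem_ofPred_eq, ← Finset.exists_toMatrix_eq_iff, Set.mem_image, coe_filter,
      burgePatterns, mem_sigma, mem_range, mem_filter_univ]
    constructor
    · obtain ⟨r, c, M⟩ := p
      rintro ⟨S, hS, rfl, hM⟩
      dsimp only at S hS hM
      have hr := hS.card_left_le
      have hc := hS.card_right_le
      rw [Fintype.card_fin] at hr hc
      exact ⟨⟨r, c, S⟩, ⟨⟨Nat.lt_succ_of_le hr, Nat.lt_succ_of_le hc, hS⟩, rfl⟩, by
        rw [← hM]; rfl⟩
    · rintro ⟨⟨r, c, S⟩, ⟨⟨-, -, hS⟩, hcard⟩, rfl⟩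
      exact ⟨S, hS, hcard, rfl⟩
  rw [BMatCard, hset, Set.ncard_image_of_injective _ patternMatrix_injective, Set.ncard_coe_finset]

theorem fubini_sq_eq_sum {k N : ℕ} (hk : k ≤ N) :
    fubini k ^ 2 = ∑ t ∈ burgePatterns N, (#t.2.2)! * Nat.stirlingSecond k #t.2.2 := by
  rw [fubini_eq_sum hk, sq, sum_mul_sum, burgePatterns, sum_sigma]
  refine sum_congr rfl fun r _ => ?_
  rw [sum_sigma]
  refine sum_congr rfl fun c _ => ?_
  rw [card_surjective_mul_card_surjective]
  refine sum_congr rfl fun S _ => ?_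
  rw [Nat.card_surjective]
  simp

theorem sum_stirling1_mul_factorial_mul_stirlingSecond (n m : ℕ) :
    ∑ k ∈ range (n + 1),
      (-1 : ℤ) ^ (n - k) * stirling1 n k * ((m ! * Nat.stirlingSecond k m : ℕ) : ℤ) =
        if m = n then (n ! : ℤ) else 0 := by
  calc _ = (m ! : ℤ) * ∑ k ∈ range (n + 1),
        (-1 : ℤ) ^ (n - k) * Nat.stirlingFirst n k * Nat.stirlingSecond k m := by
          rw [mul_sum]
          exact sum_congr rfl fun k _ => by rw [stirling1_eq_stirlingFirst]; push_cast; ring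
    _ = _ := by
      rw [Nat.sum_stirlingFirst_mul_stirlingSecond]
      rcases eq_or_ne m n with rfl | h
      · simp
      · simp [h, h.symm]

theorem binary_burge_mat_card (n : ℕ) :
    (Nat.factorial n * BMatCard n : ℤ) =
      ∑ k ∈ Finset.range (n + 1),
        (-1 : ℤ) ^ (n - k) * stirling1 n k * fubini k ^ 2 := by
  calc (n ! * BMatCard n : ℤ)
      = ∑ t ∈ burgePatterns n, if #t.2.2 = n then (n ! : ℤ) else 0 := by
        rw [sum_ite, sum_const_zero, add_zero, sum_const, BMatCard_eq_card]
        simp [mul_comm]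
    _ = ∑ k ∈ range (n + 1), (-1 : ℤ) ^ (n - k) * stirling1 n k * fubini k ^ 2 := by
        simp only [← sum_stirling1_mul_factorial_mul_stirlingSecond]
        rw [sum_comm]
        refine sum_congr rfl fun k hk => ?_
        rw [← Nat.cast_pow, fubini_sq_eq_sum (mem_range_succ_iff.mp hk), Nat.cast_sum, mul_sum]
end

section
/- For all m ≥ 0, the ordinary generating function of |Genmat_m[n]| is Σ_{n≥0} |Genmat_m[n]| x^n = (1-x)^m / (2(1-x)^m - 1), as an identity of formal power series. -/
/-!
A generator matrix is the same thing as a finite list of nonzero columns, and the weight of a list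
is the sum of the weights of its entries. Counting objects graded by a weight with generating
series, lists of objects of series `W` (with no object of weight `0`) have series `1 / (1 - W)`,
and `m`-tuples have series `W ^ m`. The columns in `ℕ^m` thus have series `V = 1 / (1 - X) ^ m`,
the nonzero ones `V - 1`, and generator matrices `1 / (2 - V) = (1 - X) ^ m / (2 (1 - X) ^ m - 1)`.
-/

open Finset

noncomputable def GenmatCard (m n : ℕ) : ℕ :=
  Set.ncard {p : Σ k : ℕ, Matrix (Fin m) (Fin k) ℕ |
    (∑ i, ∑ j, p.2 i j) = n ∧ ∀ j, ∃ i, 0 < p.2 i j}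

open PowerSeries

section WeightGF

variable (R : Type*) [Semiring R] {α β γ : Type*}

-- `Nat.card` is `0` on an infinite fibre, hence the finiteness hypotheses below.
noncomputable def weightGF (w : α → ℕ) : R⟦X⟧ :=
  PowerSeries.mk fun n => (Nat.card {a // w a = n} : R)

variable {R}

theorem coeff_weightGF (w : α → ℕ) (n : ℕ) :
    coeff n (weightGF R w) = Nat.card {a // w a = n} :=
  coeff_mk _ _

theorem weightGF_congr (e : α ≃ β) {w : α → ℕ} {v : β → ℕ} (h : ∀ a, v (e a) = w a) :
    weightGF R v = weightGF R w := by
  ext n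
  simp only [coeff_weightGF]
  rw [Nat.card_congr (e.subtypeEquiv fun a => by rw [h] : {a // w a = n} ≃ {b // v b = n})]

theorem weightGF_of_unique [Unique α] {w : α → ℕ} (h : w default = 0) : weightGF R w = 1 := by
  have hw (a : α) : w a = 0 := by rw [Unique.eq_default a, h]
  ext n
  rw [coeff_weightGF, coeff_one]
  split_ifs with hn <;> simp [hw, hn, eq_comm]

theorem weightGF_sum {u : β → ℕ} {v : γ → ℕ} [∀ n, Finite {b // u b = n}]
    [∀ n, Finite {c // v c = n}] :
    weightGF R (Sum.elim u v) = weightGF R u + weightGF R v := by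
  ext n
  simp only [coeff_weightGF, map_add]
  rw [Nat.card_congr (Equiv.subtypeSum : _ ≃ {b // u b = n} ⊕ {c // v c = n}), Nat.card_sum]
  push_cast
  rfl

def prodFiberEquiv (u : β → ℕ) (v : γ → ℕ) (n : ℕ) :
    {x : β × γ // u x.1 + v x.2 = n} ≃
      Σ p : antidiagonal n, {b // u b = p.1.1} × {c // v c = p.1.2} where
  toFun x := ⟨⟨(u x.1.1, v x.1.2), mem_antidiagonal.2 x.2⟩, ⟨x.1.1, rfl⟩, ⟨x.1.2, rfl⟩⟩
  invFun y := ⟨(y.2.1, y.2.2), by rw [y.2.1.2, y.2.2.2]; exact mem_antidiagonal.1 y.1.2⟩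
  left_inv _ := rfl
  right_inv := by
    rintro ⟨⟨⟨i, j⟩, h⟩, ⟨b, hb⟩, ⟨c, hc⟩⟩
    dsimp only at hb hc
    subst hb hc
    rfl

theorem finite_prod_fiber (u : β → ℕ) (v : γ → ℕ) [∀ n, Finite {b // u b = n}]
    [∀ n, Finite {c // v c = n}] (n : ℕ) : Finite {x : β × γ // u x.1 + v x.2 = n} :=
  .of_equiv _ (prodFiberEquiv u v n).symm

theorem weightGF_prod {u : β → ℕ} {v : γ → ℕ} [∀ n, Finite {b // u b = n}]
    [∀ n, Finite {c // v c = n}] :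
    weightGF R (fun x : β × γ => u x.1 + v x.2) = weightGF R u * weightGF R v := by
  ext n
  rw [coeff_mul, coeff_weightGF, Nat.card_congr (prodFiberEquiv u v n), Nat.card_sigma,
    ← Finset.sum_coe_sort (antidiagonal n)]
  push_cast
  simp only [Nat.card_prod, Nat.cast_mul, coeff_weightGF]

theorem finite_subtype_fiber (p : α → Prop) (w : α → ℕ) [∀ n, Finite {a // w a = n}] (n : ℕ) :
    Finite {a : {a // p a} // w a = n} :=
  .of_injective (fun a => (⟨a.1, a.2⟩ : {a // w a = n}))
    fun _ _ h => Subtype.ext <| Subtype.ext (congrArg Subtype.val h :)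

theorem weightGF_subtype_add_weightGF_compl (p : α → Prop) (w : α → ℕ)
    [∀ n, Finite {a // w a = n}] :
    weightGF R (fun a : {a // p a} => w a) + weightGF R (fun a : {a // ¬p a} => w a) =
      weightGF R w := by
  classical
  have := finite_subtype_fiber p w
  have := finite_subtype_fiber (¬p ·) w
  rw [← weightGF_sum, ← weightGF_congr (Equiv.sumCompl p) (by rintro (a | a) <;> rfl)]

theorem weightGF_nat : weightGF R (fun n : ℕ => n) = PowerSeries.mk 1 := by
  ext n
  simp [coeff_weightGF]

theorem sum_consEquiv (w : α → ℕ) {m : ℕ} (x : α × (Fin m → α)) :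
    ∑ i, w (Fin.consEquiv (fun _ => α) x i) = w x.1 + ∑ i, w (x.2 i) := by
  simp [Fin.sum_univ_succ, Fin.consEquiv]

theorem finite_tuple_fiber (w : α → ℕ) [∀ n, Finite {a // w a = n}] :
    ∀ m n : ℕ, Finite {f : Fin m → α // ∑ i, w (f i) = n}
  | 0, _ => inferInstance
  | m + 1, n =>
    have := finite_tuple_fiber w m
    have := finite_prod_fiber w (fun f : Fin m → α => ∑ i, w (f i)) n
    .of_equiv _ ((Fin.consEquiv fun _ => α).subtypeEquiv fun x => by rw [sum_consEquiv])

theorem weightGF_tuple (w : α → ℕ) [∀ n, Finite {a // w a = n}] (m : ℕ) :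
    weightGF R (fun f : Fin m → α => ∑ i, w (f i)) = weightGF R w ^ m := by
  induction m with
  | zero => exact weightGF_of_unique (by simp)
  | succ m ih =>
    have := finite_tuple_fiber w m
    rw [weightGF_congr (Fin.consEquiv fun _ => α) (sum_consEquiv w),
      weightGF_prod (v := fun f : Fin m → α => ∑ i, w (f i)), ih, pow_succ']

def listEquivUnitSumProd : List α ≃ Unit ⊕ α × List α where
  toFun
    | [] => .inl ()
    | a :: L => .inr (a, L)
  invFun
    | .inl _ => []
    | .inr (a, L) => a :: L
  left_inv L := by cases L <;> rfl
  right_inv x := by rcases x with _ | ⟨a, L⟩ <;> rfl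

theorem sum_map_listEquivUnitSumProd_symm (w : α → ℕ) (x : Unit ⊕ α × List α) :
    (listEquivUnitSumProd.symm x |>.map w).sum =
      Sum.elim (fun _ => 0) (fun y : α × List α => w y.1 + (y.2.map w).sum) x := by
  rcases x with _ | ⟨a, L⟩ <;> rfl

theorem finite_list_fiber {w : α → ℕ} (hw : ∀ a, w a ≠ 0) [∀ n, Finite {a // w a = n}]
    (n : ℕ) : Finite {L : List α // (L.map w).sum = n} := by
  induction n using Nat.strong_induction_on with
  | _ n ih =>
  -- a list of weight `n` is a head of positive weight followed by a tail of smaller weight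
  have (p : antidiagonal n) :
      Finite ({a // w a = p.1.1} × {L : List α // (L.map w).sum = p.1.2}) := by
    rcases Nat.eq_zero_or_pos p.1.1 with h0 | hpos
    · have : IsEmpty {a // w a = p.1.1} := ⟨fun a => hw a.1 (a.2.trans h0)⟩
      infer_instance
    · have := ih p.1.2 (by have := mem_antidiagonal.1 p.2; omega)
      infer_instance
  have e := listEquivUnitSumProd.symm.subtypeEquiv (p := fun x => Sum.elim (fun _ => 0)
    (fun y : α × List α => w y.1 + (y.2.map w).sum) x = n)
    (q := fun L => (L.map w).sum = n) fun x => by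
      rw [sum_map_listEquivUnitSumProd_symm]
  exact .of_equiv _ ((Equiv.subtypeSum.trans ((Equiv.refl _).sumCongr
    (prodFiberEquiv w (fun L : List α => (L.map w).sum) n))).symm.trans e)

theorem one_sub_weightGF_mul_weightGF_list {R : Type*} [Ring R] {w : α → ℕ}
    (hw : ∀ a, w a ≠ 0) [∀ n, Finite {a // w a = n}] :
    (1 - weightGF R w) * weightGF R (fun L : List α => (L.map w).sum) = 1 := by
  have := finite_list_fiber hw
  have := finite_prod_fiber w (fun L : List α => (L.map w).sum)
  have h : weightGF R (fun L : List α => (L.map w).sum) =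
      1 + weightGF R w * weightGF R (fun L : List α => (L.map w).sum) := by
    conv_lhs => rw [weightGF_congr listEquivUnitSumProd.symm
      (v := fun L : List α => (L.map w).sum) (sum_map_listEquivUnitSumProd_symm w)]
    rw [weightGF_sum, weightGF_of_unique rfl,
      weightGF_prod (v := fun L : List α => (L.map w).sum)]
  rw [sub_mul, one_mul]
  exact sub_eq_of_eq_add h

end WeightGF

section Matrices

variable {ι α : Type*}

def subtypeSigmaEquivSigmaSubtype {κ : Type*} {β : κ → Type*} (q : ∀ k, β k → Prop) :
    {p : Σ k, β k // q p.1 p.2} ≃ Σ k, {b // q k b} where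
  toFun p := ⟨p.1.1, p.1.2, p.2⟩
  invFun p := ⟨⟨p.1, p.2.1⟩, p.2.2⟩
  left_inv _ := rfl
  right_inv _ := rfl

def matricesEquivList (P : (ι → α) → Prop) :
    {p : Σ k, Matrix ι (Fin k) α // ∀ j, P fun i => p.2 i j} ≃ List {c : ι → α // P c} :=
  (subtypeSigmaEquivSigmaSubtype fun k (M : Matrix ι (Fin k) α) => ∀ j, P fun i => M i j).trans <|
    (Equiv.sigmaCongrRight fun _ =>
      ((Equiv.piComm _).subtypeEquiv fun _ => Iff.rfl).trans Equiv.subtypePiEquivPi).trans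
    List.equivSigmaTuple.symm

theorem sum_map_matricesEquivList [Fintype ι] [AddCommMonoid α] (P : (ι → α) → Prop)
    (p : {p : Σ k, Matrix ι (Fin k) α // ∀ j, P fun i => p.2 i j}) :
    ((matricesEquivList P p).map fun c => ∑ i, c.1 i).sum = ∑ i, ∑ j, p.1.2 i j := by
  change ((List.ofFn fun j => (⟨fun i => p.1.2 i j, p.2 j⟩ : {c // P c})).map _).sum = _
  rw [List.map_ofFn, List.sum_ofFn]
  exact Finset.sum_comm

end Matrices

theorem mk_genmatCard_eq_weightGF (R : Type*) [Semiring R] (m : ℕ) :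
    PowerSeries.mk (fun n => (GenmatCard m n : R)) =
      weightGF R (fun L : List {c : Fin m → ℕ // ∃ i, 0 < c i} =>
        (L.map fun c => ∑ i, c.1 i).sum) := by
  rw [weightGF_congr (matricesEquivList _)
    (sum_map_matricesEquivList fun c : Fin m → ℕ => ∃ i, 0 < c i)]
  ext n
  rw [coeff_mk, coeff_weightGF, GenmatCard, ← Nat.card_coe_set_eq]
  exact congrArg _ (Nat.card_congr ((Equiv.subtypeSubtypeEquivSubtypeInter _ _).trans
    (Equiv.subtypeEquivRight fun _ => and_comm))).symm

theorem weightGF_nonzero_columns (R : Type*) [Ring R] (m : ℕ) :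
    weightGF R (fun c : {c : Fin m → ℕ // ∃ i, 0 < c i} => ∑ i, c.1 i) =
      PowerSeries.mk 1 ^ m - 1 := by
  have := finite_tuple_fiber (fun n : ℕ => n) m
  let : Unique {c : Fin m → ℕ // ¬∃ i, 0 < c i} :=
    { default := ⟨0, by simp⟩
      uniq := fun c => Subtype.ext <| funext fun i => Nat.eq_zero_of_not_pos (not_exists.1 c.2 i) }
  rw [eq_sub_iff_add_eq, ← weightGF_of_unique (R := R)
    (w := fun c : {c : Fin m → ℕ // ¬∃ i, 0 < c i} => ∑ i, c.1 i) Finset.sum_const_zero,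
    weightGF_subtype_add_weightGF_compl, ← weightGF_nat]
  exact weightGF_tuple (fun n : ℕ => n) m

theorem genmat_ogf (m : ℕ) :
    (2 * (1 - PowerSeries.X) ^ m - 1) *
        PowerSeries.mk (fun n => (GenmatCard m n : ℚ)) =
      (1 - PowerSeries.X) ^ m := by
  have hw (c : {c : Fin m → ℕ // ∃ i, 0 < c i}) : ∑ i, c.1 i ≠ 0 := by
    obtain ⟨i, hi⟩ := c.2
    exact (Finset.sum_pos' (fun _ _ => Nat.zero_le _) ⟨i, mem_univ i, hi⟩).ne'
  have := finite_tuple_fiber (fun n : ℕ => n) m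
  have := finite_subtype_fiber (fun c : Fin m → ℕ => ∃ i, 0 < c i) (fun c => ∑ i, c i)
  have hG := one_sub_weightGF_mul_weightGF_list (R := ℚ) hw
  rw [← mk_genmatCard_eq_weightGF, weightGF_nonzero_columns] at hG
  set G := PowerSeries.mk fun n => (GenmatCard m n : ℚ)
  have hV : (1 - X : ℚ⟦X⟧) ^ m * PowerSeries.mk 1 ^ m = 1 := by
    rw [← mul_pow, mul_comm, mk_one_mul_one_sub_eq_one, one_pow]
  linear_combination (1 - X : ℚ⟦X⟧) ^ m * hG + G * hV
end

section
/- For all m, n ≥ 0: |Genmat_m[n]| = Σ_{k=0}^{n} Σ_{i=0}^{k} (-1)^i C(k,i) · C(m(k-i) + n - 1, n), where the inner term uses the multichoose coefficient ⟨m(k-i) over n⟩ = C(m(k-i)+n-1, n). -/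
/-!
Sort the matrices by their number `k` of columns; as every column is nonzero, `k ≤ n`. For fixed
`k`, run inclusion–exclusion over the set of columns forced to vanish: the matrices of entry sum `n`
vanishing on `i` given columns are the weak compositions of `n` into `m (k - i)` parts, of which
there are `⟨m (k - i) over n⟩` by stars and bars.
-/

open Finset

theorem Finset.card_sym {α : Type*} [DecidableEq α] (s : Finset α) (n : ℕ) :
    #(s.sym n) = (#s).multichoose n := by
  rw [← attach_map_val (s := s), sym_map, card_map, attach_eq_univ, sym_univ, card_univ,
    Sym.card_sym_eq_multichoose]
  simp

theorem Finset.card_piAntidiag {ι : Type*} [DecidableEq ι] (s : Finset ι) (n : ℕ) :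
    #(piAntidiag s n) = (#s).multichoose n := by
  rw [← map_sym_eq_piAntidiag, card_map, card_sym]

theorem Finset.card_filter_forall_not_eq_sum_powerset {α ι : Type*} [DecidableEq ι]
    (U : Finset α) (s : Finset ι) (P : ι → α → Prop) [∀ i, DecidablePred (P i)] :
    (#{a ∈ U | ∀ i ∈ s, ¬ P i a} : ℤ) =
      ∑ t ∈ s.powerset, (-1 : ℤ) ^ #t * #{a ∈ U | ∀ i ∈ t, P i a} := by
  have hpowerset : ∀ a, {t ∈ s.powerset | ∀ i ∈ t, P i a} = {i ∈ s | P i a}.powerset := by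
    intro a
    ext t
    simp only [mem_filter, mem_powerset, subset_iff]
    grind
  simp_rw [card_filter, Nat.cast_sum, mul_sum]
  rw [sum_comm]
  refine sum_congr rfl fun a _ => ?_
  push_cast
  simp only [mul_ite, mul_one, mul_zero]
  -- the alternating sum over the subsets of `{i ∈ s | P i a}` vanishes unless that set is empty
  rw [← sum_filter, hpowerset, sum_powerset_neg_one_pow_card]
  simp [filter_eq_empty_iff]

theorem card_le_sum_of_forall_exists_pos {ι κ : Type*} [Fintype ι] [Fintype κ] {A : ι → κ → ℕ}
    (h : ∀ j, ∃ i, 0 < A i j) : Fintype.card κ ≤ ∑ i, ∑ j, A i j :=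
  calc Fintype.card κ = ∑ _j : κ, 1 := by simp
    _ ≤ ∑ j, ∑ i, A i j := sum_le_sum fun j _ =>
      (h j).elim fun i hi => hi.trans_le (single_le_sum (f := (A · j)) (by simp) (mem_univ i))
    _ = ∑ i, ∑ j, A i j := sum_comm

/-- Matrices are taken here as curried functions rather than as `Matrix ι κ ℕ` (the same type up to
unfolding), so that `simp` and `rw` can see through the applications `A i j`. -/
def colAntidiag (ι : Type*) {κ : Type*} [Fintype ι] [DecidableEq ι] [DecidableEq κ]
    (t : Finset κ) (n : ℕ) : Finset (ι → κ → ℕ) :=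
  (piAntidiag (univ ×ˢ t) n).map (Equiv.curry ι κ ℕ).toEmbedding

section colAntidiag

variable {ι κ : Type*} [Fintype ι] [DecidableEq ι] [DecidableEq κ]

theorem card_colAntidiag (t : Finset κ) (n : ℕ) :
    #(colAntidiag ι t n) = (Fintype.card ι * #t).multichoose n := by
  rw [colAntidiag, card_map, card_piAntidiag, card_product, card_univ]

variable [Fintype κ]

theorem mem_colAntidiag {t : Finset κ} {n : ℕ} {A : ι → κ → ℕ} :
    A ∈ colAntidiag ι t n ↔ ∑ i, ∑ j, A i j = n ∧ ∀ i, ∀ j ∉ t, A i j = 0 := by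
  simp only [colAntidiag, mem_map_equiv, mem_piAntidiag, sum_product, Prod.forall, mem_product,
    mem_univ, true_and, Equiv.curry_symm_apply, Function.uncurry_apply_pair,
    not_imp_comm (a := _ = 0)]
  refine and_congr_left fun h => ?_
  rw [sum_congr rfl fun i _ => sum_subset (subset_univ t) fun j _ hj => h i j hj]

theorem filter_colAntidiag_forall_col_eq_zero (s t : Finset κ) (n : ℕ)
    [DecidablePred fun A : ι → κ → ℕ => ∀ j ∈ t, ∀ i, A i j = 0] :
    {A ∈ colAntidiag ι s n | ∀ j ∈ t, ∀ i, A i j = 0} = colAntidiag ι (s \ t) n := by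
  ext A
  simp only [mem_filter, mem_colAntidiag, mem_sdiff, not_and_or, not_not]
  grind

theorem card_filter_colAntidiag_forall_exists_pos (n : ℕ)
    [DecidablePred fun A : ι → κ → ℕ => ∀ j, ∃ i, 0 < A i j] :
    (#{A ∈ colAntidiag ι (univ : Finset κ) n | ∀ j, ∃ i, 0 < A i j} : ℤ) =
      ∑ i ∈ range (Fintype.card κ + 1), (-1 : ℤ) ^ i * (Fintype.card κ).choose i *
        (Fintype.card ι * (Fintype.card κ - i)).multichoose n := by
  have h := card_filter_forall_not_eq_sum_powerset (colAntidiag ι (univ : Finset κ) n) univ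
    (fun j (A : ι → κ → ℕ) => ∀ i, A i j = 0)
  simp only [filter_colAntidiag_forall_col_eq_zero, card_colAntidiag, card_univ_sdiff] at h
  rw [sum_powerset_apply_card (fun i => (-1 : ℤ) ^ i *
    ((Fintype.card ι * (Fintype.card κ - i)).multichoose n : ℕ)), card_univ] at h
  convert h using 3 with i
  · ext A
    simp [pos_iff_ne_zero]
  · rw [nsmul_eq_mul]
    ring

end colAntidiag

theorem genmatCard_eq_sum (m n : ℕ) :
    GenmatCard m n = ∑ k ∈ range (n + 1),
      #{A ∈ colAntidiag (Fin m) (univ : Finset (Fin k)) n | ∀ j, ∃ i, 0 < A i j} := by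
  have hset : {p : Σ k : ℕ, Fin m → Fin k → ℕ | (∑ i, ∑ j, p.2 i j) = n ∧ ∀ j, ∃ i, 0 < p.2 i j} =
      ↑((range (n + 1)).sigma fun k =>
        {A ∈ colAntidiag (Fin m) (univ : Finset (Fin k)) n | ∀ j, ∃ i, 0 < A i j}) := by
    ext ⟨k, A⟩
    simp only [Set.mem_ofPred_eq, coe_sigma, Set.mem_sigma_iff, mem_coe, mem_range, mem_filter,
      mem_colAntidiag, mem_univ, not_true_eq_false, IsEmpty.forall_iff, implies_true, and_true]
    refine ⟨fun h => ⟨?_, h⟩, And.right⟩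
    have hk := card_le_sum_of_forall_exists_pos h.2
    rw [Fintype.card_fin, h.1] at hk
    omega
  unfold GenmatCard
  change Set.ncard {p : Σ k : ℕ, Fin m → Fin k → ℕ | _} = _
  rw [hset, Set.ncard_coe_finset, card_sigma]

theorem genmat_card_sign_reversing (m n : ℕ) :
    (GenmatCard m n : ℤ) =
      ∑ k ∈ Finset.range (n + 1), ∑ i ∈ Finset.range (k + 1),
        (-1 : ℤ) ^ i * k.choose i * (m * (k - i) + n - 1).choose n := by
  rw [genmatCard_eq_sum, Nat.cast_sum]
  refine sum_congr rfl fun k _ => ?_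
  rw [card_filter_colAntidiag_forall_exists_pos]
  simp only [Fintype.card_fin, Nat.multichoose_eq]
end

section
/- Let n ≥ 1 and S = {s_1 < ... < s_r} ⊆ [n-1], with s_0 = 0, s_{r+1} = n. The number of Cayley permutations w of [n] with weak ascent set Asc(w) = {i : w(i) ≤ w(i+1)} contained in S equals Σ_{k=0}^{n} Σ_{i=0}^{k} (-1)^i C(k,i) Π_{j=0}^{r} C(k-i, s_{j+1} - s_j). -/
/-!
Let `D(k)` count the maps `v : [n] → [k]` whose weak ascents all lie in `S`, i.e. which are
strictly decreasing on each block `[s_j, s_{j+1})`. Choosing the value set of each block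
independently gives `D(k) = ∏_j C(k, s_{j+1} - s_j)`. Sorting the maps by their image and
relabelling the image order-preservingly onto `[m]` gives `D(k) = ∑_m C(k, m) c(m)`, where `c(m)`
counts the surjections `[n] → [m]` with weak ascents in `S`, i.e. (after adding 1) the Cayley
permutations with maximum `m`. Binomial inversion solves for `c(k)`; summing over `k ≤ n` gives
the formula.
-/

open Finset

def IsCayley {n : ℕ} (w : Fin n → ℕ) : Prop :=
  ∃ k ≤ n, Set.range w = Set.Icc 1 k

def ascSetW {n : ℕ} (w : Fin n → ℕ) : Finset ℕ :=
  (Finset.univ.filter (fun i : Fin (n - 1) =>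
    w ⟨i.val, by have := i.isLt; omega⟩ ≤ w ⟨i.val + 1, by have := i.isLt; omega⟩)).image
    (fun i => i.val + 1)

lemma choose_mul_choose_sub_comm {k i m : ℕ} (h : i + m ≤ k) :
    k.choose i * (k - i).choose m = k.choose m * (k - m).choose i := by
  rw [← Nat.choose_symm (by omega : i ≤ k), Nat.choose_mul (by omega : m ≤ k - i),
    ← Nat.choose_symm (by omega : k - i - m ≤ k - m)]
  congr 2
  omega

theorem binomial_inversion (f g : ℕ → ℤ) (k : ℕ)
    (h : ∀ j ≤ k, f j = ∑ m ∈ range (j + 1), (j.choose m : ℤ) * g m) :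
    ∑ i ∈ range (k + 1), (-1) ^ i * (k.choose i : ℤ) * f (k - i) = g k := by
  calc ∑ i ∈ range (k + 1), (-1) ^ i * (k.choose i : ℤ) * f (k - i)
      = ∑ i ∈ range (k + 1), ∑ m ∈ range (k - i + 1),
          (-1) ^ i * (k.choose i * (k - i).choose m : ℕ) * g m := by
        refine sum_congr rfl fun i _ => ?_
        rw [h _ (Nat.sub_le k i), mul_sum]
        refine sum_congr rfl fun m _ => ?_
        push_cast; ring
    _ = ∑ m ∈ range (k + 1), ∑ i ∈ range (k - m + 1),
          (-1) ^ i * (k.choose i * (k - i).choose m : ℕ) * g m :=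
        sum_comm' fun i m => by simp only [mem_range]; omega
    _ = ∑ m ∈ range (k + 1), (k.choose m * g m) *
          ∑ i ∈ range (k - m + 1), (-1) ^ i * ((k - m).choose i : ℤ) := by
        refine sum_congr rfl fun m hm => ?_
        rw [mul_sum]
        refine sum_congr rfl fun i hi => ?_
        simp only [mem_range] at hm hi
        rw [choose_mul_choose_sub_comm (by omega)]
        push_cast; ring
    _ = g k := by
        simp_rw [Int.alternating_sum_range_choose]
        rw [sum_eq_single_of_mem k (self_mem_range_succ k) fun m hm hmk => ?_]
        · simp
        · simp only [mem_range] at hm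
          simp [show k - m ≠ 0 by omega]

variable {α β : Type*}

-- `i + 1` is the 1-based position of the pair `(v i, v (i + 1))`, as in `ascSetW`.
def WeakAscentsIn [LT α] {n : ℕ} (S : Finset ℕ) (v : Fin n → α) : Prop :=
  ∀ i (h : i + 1 < n), i + 1 ∉ S → v ⟨i + 1, h⟩ < v ⟨i, by omega⟩

lemma ascSetW_subset_iff {n : ℕ} {S : Finset ℕ} {w : Fin n → ℕ} :
    ascSetW w ⊆ S ↔ WeakAscentsIn S w := by
  simp only [ascSetW, WeakAscentsIn, subset_iff, mem_image, mem_filter, mem_univ, true_and]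
  constructor
  · intro h i hi hiS
    by_contra hle
    exact hiS (h ⟨⟨i, by omega⟩, not_lt.mp hle, rfl⟩)
  · rintro h _ ⟨i, hle, rfl⟩
    by_contra hiS
    exact (h i (by omega) hiS).not_ge hle

lemma weakAscentsIn_comp_iff [LinearOrder α] [Preorder β] {n : ℕ} {S : Finset ℕ} {f : α → β}
    (hf : StrictMono f) {v : Fin n → α} :
    WeakAscentsIn S (f ∘ v) ↔ WeakAscentsIn S v := by
  simp only [WeakAscentsIn, Function.comp_apply, hf.lt_iff_lt]

lemma weakAscentsIn_empty_iff [Preorder α] {n : ℕ} {v : Fin n → α} :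
    WeakAscentsIn ∅ v ↔ StrictAnti v := by
  cases n with
  | zero => exact iff_of_true (fun i h => by omega) fun i => i.elim0
  | succ n =>
    rw [Fin.strictAnti_iff_succ_lt]
    exact ⟨fun h i => h i (by omega) (notMem_empty _), fun h i hi _ => h ⟨i, by omega⟩⟩

lemma weakAscentsIn_insert_append_iff [Preorder α] {a b : ℕ} {S : Finset ℕ}
    (hS : ∀ t ∈ S, t ≤ a) {u : Fin a → α} {v : Fin b → α} :
    WeakAscentsIn (insert a S) (Fin.append u v) ↔ WeakAscentsIn S u ∧ StrictAnti v := by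
  have hleft : ∀ i (hi : i < a), Fin.append u v ⟨i, by omega⟩ = u ⟨i, hi⟩ :=
    fun i hi => Fin.append_left u v ⟨i, hi⟩
  have hright : ∀ i (hi : i < b), Fin.append u v ⟨a + i, by omega⟩ = v ⟨i, hi⟩ :=
    fun i hi => Fin.append_right u v ⟨i, hi⟩
  rw [← weakAscentsIn_empty_iff]
  constructor
  · intro h
    refine ⟨fun i hi hiS => ?_, fun i hi _ => ?_⟩
    · have := h i (by omega) (by rw [mem_insert, not_or]; exact ⟨by omega, hiS⟩)
      rwa [hleft i (by omega), hleft (i + 1) hi] at this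
    · have := h (a + i) (by omega) (by
        rw [mem_insert, not_or]
        exact ⟨by omega, fun h' => absurd (hS _ h') (by omega)⟩)
      rw [← hright i (by omega), ← hright (i + 1) hi]
      exact this
  · rintro ⟨hu, hv⟩ i hi hiS
    rw [mem_insert, not_or] at hiS
    rcases lt_or_gt_of_ne hiS.1 with hia | hia
    · rw [hleft i (by omega), hleft (i + 1) hia]
      exact hu i hia hiS.2
    · obtain ⟨j, rfl⟩ : ∃ j, i = a + j := ⟨i - a, by omega⟩
      have := hv j (by omega) (notMem_empty _)
      rw [← hright j (by omega), ← hright (j + 1) (by omega)] at this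
      exact this

lemma Fin.card_strictAnti (b k : ℕ) :
    Nat.card {f : Fin b → Fin k // StrictAnti f} = k.choose b := by
  let e : {f : Fin b → Fin k // StrictAnti f} ≃ (Fin b ↪o (Fin k)ᵒᵈ) :=
    { toFun := fun f => OrderEmbedding.ofStrictMono (OrderDual.toDual ∘ f.1) f.2.dual_right
      invFun := fun g => ⟨OrderDual.ofDual ∘ g, g.strictMono.dual_right⟩
      left_inv := fun _ => rfl
      right_inv := fun _ => rfl }
  rw [Nat.card_congr (e.trans Set.powersetCard.ofFinEmbEquiv), Set.powersetCard.card,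
    Nat.card_eq_fintype_card, Fintype.card_orderDual, Fintype.card_fin]

lemma card_weakAscentsIn_insert_append {a b k : ℕ} {S : Finset ℕ} (hS : ∀ t ∈ S, t ≤ a) :
    Nat.card {v : Fin (a + b) → Fin k // WeakAscentsIn (insert a S) v} =
      Nat.card {u : Fin a → Fin k // WeakAscentsIn S u} * k.choose b := by
  rw [← Fin.card_strictAnti, ← Nat.card_prod, ← Nat.card_congr Equiv.subtypeProdEquivProd]
  exact Nat.card_congr ((Fin.appendEquiv a b).subtypeEquiv
    fun x => (weakAscentsIn_insert_append_iff hS).symm).symm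

theorem card_weakAscentsIn_blocks (k r : ℕ) {s : ℕ → ℕ} (hs0 : s 0 = 0)
    (hs : MonotoneOn s (Set.Iic (r + 1))) :
    Nat.card {v : Fin (s (r + 1)) → Fin k // WeakAscentsIn ((Icc 1 r).image s) v} =
      ∏ j ∈ range (r + 1), k.choose (s (j + 1) - s j) := by
  induction r with
  | zero =>
    rw [Icc_eq_empty (by omega), image_empty, prod_range_one, hs0, Nat.sub_zero,
      ← Fin.card_strictAnti]
    simp_rw [weakAscentsIn_empty_iff]
  | succ r ih =>
    have hle : ∀ {i j}, i ≤ j → j ≤ r + 2 → s i ≤ s j := fun hij hj =>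
      hs (Set.mem_Iic.mpr (by omega)) (Set.mem_Iic.mpr hj) hij
    obtain ⟨d, hd⟩ : ∃ d, s (r + 2) = s (r + 1) + d :=
      Nat.exists_eq_add_of_le (hle (by omega) le_rfl)
    rw [prod_range_succ, ← ih (hs.mono (Set.Iic_subset_Iic.mpr (by omega))), hd,
      Nat.add_sub_cancel_left, ← Finset.insert_Icc_right_eq_Icc_add_one (by omega), image_insert]
    refine card_weakAscentsIn_insert_append fun t ht => ?_
    obtain ⟨j, hj, rfl⟩ := mem_image.mp ht
    exact hle (by have := (mem_Icc.mp hj).2; omega) (by omega)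

lemma range_eq_range_iff_exists_surjective {ι γ : Type*} {g : γ → β} (hg : Function.Injective g)
    {v : ι → β} : Set.range v = Set.range g ↔ ∃ u : ι → γ, Function.Surjective u ∧ g ∘ u = v := by
  refine ⟨fun hv => ?_, fun ⟨u, hu, hgu⟩ => hgu ▸ hu.range_comp g⟩
  choose u hu using fun i => hv ▸ Set.mem_range_self (f := v) i
  refine ⟨u, fun c => ?_, funext hu⟩
  obtain ⟨i, hi⟩ : g c ∈ Set.range v := hv ▸ Set.mem_range_self c
  exact ⟨i, hg (by rw [hu, hi])⟩

lemma Fin.range_val_add_one (m : ℕ) : Set.range (fun i : Fin m => (i : ℕ) + 1) = Set.Icc 1 m := by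
  ext x
  simp only [Set.mem_range, Set.mem_Icc]
  constructor
  · rintro ⟨i, rfl⟩
    omega
  · rintro ⟨h1, h2⟩
    exact ⟨⟨x - 1, by omega⟩, by simp only; omega⟩

lemma card_weakAscentsIn_range_eq [LinearOrder β] {n : ℕ} (S : Finset ℕ) (T : Finset β) :
    Nat.card {v : Fin n → β // WeakAscentsIn S v ∧ Set.range v = T} =
      Nat.card {u : Fin n → Fin T.card // Function.Surjective u ∧ WeakAscentsIn S u} := by
  set g := T.orderEmbOfFin rfl
  have hg : Set.range g = T := range_orderEmbOfFin T rfl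
  symm
  refine Nat.card_eq_of_bijective (fun u => ⟨g ∘ u.1, (weakAscentsIn_comp_iff g.strictMono).2 u.2.2,
    hg ▸ u.2.1.range_comp g⟩) ⟨fun u u' h => ?_, fun ⟨v, hv, hrange⟩ => ?_⟩
  · exact Subtype.ext (funext fun i => g.injective (congrFun (congrArg Subtype.val h) i))
  · obtain ⟨u, hu, rfl⟩ := (range_eq_range_iff_exists_surjective g.injective).1 (hg ▸ hrange)
    exact ⟨⟨u, hu, (weakAscentsIn_comp_iff g.strictMono).1 hv⟩, rfl⟩

theorem card_weakAscentsIn_eq_sum_choose_mul (S : Finset ℕ) (n k : ℕ) :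
    Nat.card {v : Fin n → Fin k // WeakAscentsIn S v} = ∑ m ∈ range (k + 1), k.choose m *
      Nat.card {u : Fin n → Fin m // Function.Surjective u ∧ WeakAscentsIn S u} := by
  classical
  calc Nat.card {v : Fin n → Fin k // WeakAscentsIn S v}
      = ∑ T : Finset (Fin k),
          Nat.card {v : Fin n → Fin k // WeakAscentsIn S v ∧ Set.range v = T} := by
        simp only [Nat.card_eq_fintype_card, Fintype.card_subtype]
        rw [card_eq_sum_card_fiberwise (f := fun v => univ.image v) (t := univ) (by simp)]
        simp [filter_filter, ← coe_inj]
    _ = ∑ m ∈ range (k + 1), k.choose m *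
          Nat.card {u : Fin n → Fin m // Function.Surjective u ∧ WeakAscentsIn S u} := by
        simp only [card_weakAscentsIn_range_eq, ← powerset_univ]
        rw [sum_powerset_apply_card (fun m =>
          Nat.card {u : Fin n → Fin m // Function.Surjective u ∧ WeakAscentsIn S u})]
        simp

theorem ncard_cayley_weakAscentsIn (n : ℕ) (S : Finset ℕ) :
    {w : Fin n → ℕ | IsCayley w ∧ ascSetW w ⊆ S}.ncard = ∑ m ∈ range (n + 1),
      Nat.card {u : Fin n → Fin m // Function.Surjective u ∧ WeakAscentsIn S u} := by
  have hsucc : ∀ m, StrictMono (fun i : Fin m => (i : ℕ) + 1) := fun m i j h => by simpa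
  let Φ (x : Σ m : Fin (n + 1), {u : Fin n → Fin m // Function.Surjective u ∧ WeakAscentsIn S u}) :
      Fin n → ℕ := (fun i : Fin x.1 => (i : ℕ) + 1) ∘ x.2.1
  have hΦrange : ∀ x, Set.range (Φ x) = Set.Icc 1 (x.1 : ℕ) := fun x =>
    (x.2.2.1.range_comp _).trans (Fin.range_val_add_one x.1)
  have hΦ : Function.Injective Φ := by
    rintro ⟨m, u, hu⟩ ⟨m', u', hu'⟩ h
    have hIcc : Set.Icc 1 (m : ℕ) = Set.Icc 1 (m' : ℕ) :=
      (hΦrange ⟨m, u, hu⟩).symm.trans (h ▸ hΦrange ⟨m', u', hu'⟩)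
    obtain rfl : m = m' := Fin.ext (by simpa using congrArg Set.ncard hIcc)
    obtain rfl : u = u' := funext fun i => Fin.ext (by simpa [Φ] using congrFun h i)
    rfl
  have hset : {w : Fin n → ℕ | IsCayley w ∧ ascSetW w ⊆ S} = Set.range Φ := by
    ext w
    simp only [Set.mem_ofPred_eq, IsCayley, ascSetW_subset_iff]
    constructor
    · rintro ⟨⟨k, hk, hw⟩, hW⟩
      obtain ⟨u, hu, rfl⟩ := (range_eq_range_iff_exists_surjective (hsucc k).injective).1
        (hw.trans (Fin.range_val_add_one k).symm)
      exact ⟨⟨⟨k, by omega⟩, u, hu, (weakAscentsIn_comp_iff (hsucc k)).1 hW⟩, rfl⟩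
    · rintro ⟨x, rfl⟩
      exact ⟨⟨x.1, x.1.is_le, hΦrange x⟩, (weakAscentsIn_comp_iff (hsucc x.1)).2 x.2.2.2⟩
  rw [hset, Set.ncard_range_of_injective hΦ, Nat.card_sigma]
  exact Fin.sum_univ_eq_sum_range (fun m =>
    Nat.card {u : Fin n → Fin m // Function.Surjective u ∧ WeakAscentsIn S u}) (n + 1)

theorem cayley_prescribed_weak_ascent_set_general (n r : ℕ) (s : ℕ → ℕ)
    (hs0 : s 0 = 0) (hsn : s (r + 1) = n)
    (hmono : ∀ j ≤ r, s j < s (j + 1)) (S : Finset ℕ)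
    (hS : S = (Finset.Icc 1 r).image s) :
    (Set.ncard {w : Fin n → ℕ | IsCayley w ∧ ascSetW w ⊆ S} : ℤ) =
      ∑ k ∈ Finset.range (n + 1), ∑ i ∈ Finset.range (k + 1),
        (-1 : ℤ) ^ i * k.choose i *
          ∏ j ∈ Finset.range (r + 1), (k - i).choose (s (j + 1) - s j) := by
  have hs : MonotoneOn s (Set.Iic (r + 1)) :=
    (strictMonoOn_Iic_of_lt_succ fun j hj => by
      simpa using hmono j (Nat.lt_succ_iff.mp hj)).monotoneOn
  have hblocks (k : ℕ) : ∏ j ∈ range (r + 1), k.choose (s (j + 1) - s j) =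
      Nat.card {v : Fin n → Fin k // WeakAscentsIn S v} := by
    subst hsn hS
    exact (card_weakAscentsIn_blocks k r hs0 hs).symm
  rw [ncard_cayley_weakAscentsIn, Nat.cast_sum]
  refine sum_congr rfl fun k _ => ?_
  simp only [hblocks]
  refine (binomial_inversion (fun j => Nat.card {v : Fin n → Fin j // WeakAscentsIn S v})
    (fun m => Nat.card {u : Fin n → Fin m // Function.Surjective u ∧ WeakAscentsIn S u})
    k fun j _ => ?_).symm
  exact_mod_cast card_weakAscentsIn_eq_sum_choose_mul S n j

theorem cayley_prescribed_weak_ascent_set (n r : ℕ) (hn : 1 ≤ n) (s : ℕ → ℕ)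
    (hs0 : s 0 = 0) (hsn : s (r + 1) = n)
    (hmono : ∀ j ≤ r, s j < s (j + 1)) (S : Finset ℕ)
    (hS : S = (Finset.Icc 1 r).image s) :
    (Set.ncard {w : Fin n → ℕ | IsCayley w ∧ ascSetW w ⊆ S} : ℤ) =
      ∑ k ∈ Finset.range (n + 1), ∑ i ∈ Finset.range (k + 1),
        (-1 : ℤ) ^ i * k.choose i *
          ∏ j ∈ Finset.range (r + 1), (k - i).choose (s (j + 1) - s j) :=
  cayley_prescribed_weak_ascent_set_general n r s hs0 hsn hmono S hS
end
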